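/- Let R be a commutative ring and let F ∈ R⟦x,y⟧ satisfy: F has zero constant coefficient, F(x,0) = x, F(0,y) = y, and F(F(x,y),z) = F(x,F(y,z)) (a one-dimensional formal group law). Let [n]_F(t) be the associated n-series, let p be a prime, and let j be a natural number not divisible by p. Then: (i) the difference ∏_{k=1}^{p-1} [j·k]_F(t) − ∏_{k=1}^{p-1} [k]_F(t) lies in the ideal of R⟦t⟧ generated by [p]_F(t); and (ii) the difference ∏_{k=1}^{p-1} F(x, [j·k]_F(t)) − ∏_{k=1}^{p-1} F(x, [k]_F(t)) lies in the ideal of R⟦x,t⟧ generated by [p]_F(t). -/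

import Mathlib

/-- Substitution of (multivariate) formal power series: for `a : σ → MvPowerSeries τ R`
(each entry having zero constant coefficient) and `f ∈ R⟦xₛ : s ∈ σ⟧`, the coefficient
of the monomial `d` in `f(a)` is the (finite) sum over exponents `e` of
`(coeff of e in f) * (coeff of d in ∏ₛ (a s)^(e s))`. -/
noncomputable def MvPowerSeries.substitute {σ τ R : Type*} [CommRing R]
    (a : σ → MvPowerSeries τ R) (f : MvPowerSeries σ R) : MvPowerSeries τ R :=
  fun d => ∑ᶠ e : σ →₀ ℕ, MvPowerSeries.coeff e f *
    MvPowerSeries.coeff d (e.prod fun s n => a s ^ n)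

/-- Substitution of a one-variable formal power series `g ∈ R⟦z⟧` at a
(multivariate) power series `s`, i.e. `g(s)`. -/
noncomputable def PowerSeries.substitute {τ R : Type*} [CommRing R]
    (s : MvPowerSeries τ R) (g : PowerSeries R) : MvPowerSeries τ R :=
  MvPowerSeries.substitute (fun _ : Unit => s) g

/-- The `n`-series `[n]_F(t)` of a two-variable formal power series `F ∈ R⟦x,y⟧`,
defined recursively by `[0]_F(t) = 0` and `[n+1]_F(t) = F([n]_F(t), t)`. -/
noncomputable def MvPowerSeries.nSeries {R : Type*} [CommRing R]
    (F : MvPowerSeries (Fin 2) R) : ℕ → PowerSeries R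
  | 0 => 0
  | n + 1 => MvPowerSeries.substitute ![MvPowerSeries.nSeries F n, PowerSeries.X] F

/-!
The `n`-series is periodic modulo `[p]_F`. Indeed, if `a` and `b` differ only in the coordinate
`s₀`, then `f(a) - f(b) = ∑ₑ fₑ (aᵉ - bᵉ)` and `aᵉ - bᵉ = (a s₀ - b s₀) wₑ` with `wₑ` of order at
least `|e| - 1`, so `∑ₑ fₑ wₑ` converges and `a s₀ - b s₀ ∣ f(a) - f(b)`. Hence
`[n + p] - [n] ∣ [n + p + 1] - [n + 1]`, and by induction from `[p] - [0] = [p]` every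
`[n + p] - [n]` is a multiple of `[p]`; the same then holds for `F(x, [n + p](t)) - F(x, [n](t))`.
Since `k ↦ j k mod p` permutes `{1, …, p - 1}`, both products are unchanged modulo `[p]`.
-/

open MvPowerSeries Finset

namespace MvPowerSeries

open WithPiTopology

variable {σ τ R : Type*} [CommRing R]

theorem substitute_eq_subst {a : σ → MvPowerSeries τ R} (ha : HasSubst a)
    (f : MvPowerSeries σ R) : substitute a f = subst a f := by
  ext d
  rw [coeff_subst ha]
  rfl

theorem hasSum_subst [UniformSpace R] [DiscreteUniformity R] {a : σ → MvPowerSeries τ R}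
    (ha : HasSubst a) (f : MvPowerSeries σ R) :
    HasSum (fun e ↦ coeff e f • e.prod fun s n ↦ a s ^ n) (subst a f) := by
  rw [← coe_substAlgHom ha, substAlgHom_eq_aeval]
  exact hasSum_aeval ha.hasEval f

theorem le_order_sum {ι : Type*} (t : Finset ι) (f : ι → MvPowerSeries σ R) {n : ℕ∞}
    (h : ∀ i ∈ t, n ≤ (f i).order) : n ≤ (∑ i ∈ t, f i).order :=
  le_order fun d hd ↦ by
    rw [map_sum]
    exact Finset.sum_eq_zero fun i hi ↦ coeff_of_lt_order (hd.trans_le (h i hi))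


theorem exists_prod_pow_sub_prod_pow_eq_mul [Fintype σ] [DecidableEq σ]
    {a b : σ → MvPowerSeries τ R} (ha : ∀ s, constantCoeff (a s) = 0)
    (hb : ∀ s, constantCoeff (b s) = 0) {s₀ : σ} (hab : ∀ s ≠ s₀, a s = b s) (e : σ →₀ ℕ) :
    ∃ w : MvPowerSeries τ R,
      ((e.prod fun s n ↦ a s ^ n) - e.prod fun s n ↦ b s ^ n) = (a s₀ - b s₀) * w ∧
        ((e.degree - 1 : ℕ) : ℕ∞) ≤ w.order := by
  set n := e s₀
  set G := ∑ i ∈ range n, a s₀ ^ i * b s₀ ^ (n - 1 - i)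
  set Q := ∏ s ∈ univ.erase s₀, a s ^ e s
  refine ⟨G * Q, ?_, ?_⟩
  · have hQ : ∏ s ∈ univ.erase s₀, b s ^ e s = Q :=
      prod_congr rfl fun s hs ↦ by rw [hab s (ne_of_mem_erase hs)]
    rw [Finsupp.prod_fintype _ _ fun _ ↦ pow_zero _, Finsupp.prod_fintype _ _ fun _ ↦ pow_zero _,
      ← mul_prod_erase univ _ (mem_univ s₀), ← mul_prod_erase univ _ (mem_univ s₀), hQ,
      ← sub_mul, ← geom_sum₂_mul, mul_comm G, mul_assoc]
  · have hG : ((n - 1 : ℕ) : ℕ∞) ≤ G.order := le_order_sum _ _ fun i hi ↦ by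
      calc ((n - 1 : ℕ) : ℕ∞) = (i : ℕ∞) + (n - 1 - i : ℕ) := by
            rw [mem_range] at hi; norm_cast; omega
        _ ≤ (a s₀ ^ i).order + (b s₀ ^ (n - 1 - i)).order :=
            add_le_add (le_order_pow_of_constantCoeff_eq_zero _ (ha s₀))
              (le_order_pow_of_constantCoeff_eq_zero _ (hb s₀))
        _ ≤ _ := le_order_mul
    have hQ : ((∑ s ∈ univ.erase s₀, e s : ℕ) : ℕ∞) ≤ Q.order := by
      push_cast
      exact (sum_le_sum fun s _ ↦ le_order_pow_of_constantCoeff_eq_zero _ (ha s)).trans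
        (le_order_prod _ _)
    have hdeg : e.degree = n + ∑ s ∈ univ.erase s₀, e s := by
      rw [Finsupp.degree_eq_sum, ← add_sum_erase univ _ (mem_univ s₀)]
    calc ((e.degree - 1 : ℕ) : ℕ∞) ≤ ((n - 1 : ℕ) : ℕ∞) + (∑ s ∈ univ.erase s₀, e s : ℕ) := by
          norm_cast; omega
      _ ≤ G.order + Q.order := add_le_add hG hQ
      _ ≤ (G * Q).order := le_order_mul

theorem sub_dvd_subst_sub [Fintype σ] [DecidableEq σ]
    {a b : σ → MvPowerSeries τ R} (ha : ∀ s, constantCoeff (a s) = 0)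
    (hb : ∀ s, constantCoeff (b s) = 0) {s₀ : σ} (hab : ∀ s ≠ s₀, a s = b s)
    (f : MvPowerSeries σ R) : a s₀ - b s₀ ∣ subst a f - subst b f := by
  let : UniformSpace R := ⊥
  choose W hW hWord using exists_prod_pow_sub_prod_pow_eq_mul ha hb hab
  have hsum : Summable fun e ↦ coeff e f • W e := by
    refine summable_iff_summable_coeff.2 fun d ↦ summable_of_hasFiniteSupport <|
      (Finsupp.finite_of_degree_le (d.degree + 1)).subset fun e ↦ not_imp_comm.1 fun he ↦ ?_
    have hd : (d.degree : ℕ∞) < (W e).order :=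
      (ENat.natCast_lt_natCast.2 (by simp only [Set.mem_ofPred_eq, not_le] at he; omega)).trans_le
        (hWord e)
    change coeff d (coeff e f • W e) = 0
    rw [coeff_smul, coeff_of_lt_order hd, mul_zero]
  have hdiff := (hasSum_subst (hasSubst_of_constantCoeff_zero ha) f).sub
    (hasSum_subst (hasSubst_of_constantCoeff_zero hb) f)
  refine ⟨∑' e, coeff e f • W e, hdiff.unique <| (hsum.hasSum.mul_left _).congr_fun fun e ↦ ?_⟩
  rw [← smul_sub, hW, mul_smul_comm]

theorem hasSubst_pair {u v : MvPowerSeries τ R} (hu : constantCoeff u = 0)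
    (hv : constantCoeff v = 0) : HasSubst ![u, v] :=
  hasSubst_of_constantCoeff_zero (Fin.forall_fin_two.2 ⟨hu, hv⟩)

theorem sub_dvd_substitute_pair_sub_left (F : MvPowerSeries (Fin 2) R)
    {u v y : MvPowerSeries τ R} (hu : constantCoeff u = 0) (hv : constantCoeff v = 0)
    (hy : constantCoeff y = 0) :
    u - v ∣ substitute ![u, y] F - substitute ![v, y] F := by
  rw [substitute_eq_subst (hasSubst_pair hu hy), substitute_eq_subst (hasSubst_pair hv hy)]
  exact sub_dvd_subst_sub (a := ![u, y]) (b := ![v, y]) (s₀ := 0) (Fin.forall_fin_two.2 ⟨hu, hy⟩)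
    (Fin.forall_fin_two.2 ⟨hv, hy⟩) (Fin.forall_fin_two.2 ⟨fun h ↦ (h rfl).elim, fun _ ↦ rfl⟩) F

theorem sub_dvd_substitute_pair_sub_right (F : MvPowerSeries (Fin 2) R)
    {x u v : MvPowerSeries τ R} (hx : constantCoeff x = 0) (hu : constantCoeff u = 0)
    (hv : constantCoeff v = 0) :
    u - v ∣ substitute ![x, u] F - substitute ![x, v] F := by
  rw [substitute_eq_subst (hasSubst_pair hx hu), substitute_eq_subst (hasSubst_pair hx hv)]
  exact sub_dvd_subst_sub (a := ![x, u]) (b := ![x, v]) (s₀ := 1) (Fin.forall_fin_two.2 ⟨hx, hu⟩)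
    (Fin.forall_fin_two.2 ⟨hx, hv⟩) (Fin.forall_fin_two.2 ⟨fun _ ↦ rfl, fun h ↦ (h rfl).elim⟩) F

end MvPowerSeries

namespace PowerSeries

variable {τ R : Type*} [CommRing R] {s : MvPowerSeries τ R}

theorem coe_substAlgHom_eq_substitute (hs : MvPowerSeries.constantCoeff s = 0) :
    ⇑(MvPowerSeries.substAlgHom (hasSubst_of_constantCoeff_zero fun _ : Unit ↦ hs)) =
      substitute s := by
  ext1 g
  rw [MvPowerSeries.coe_substAlgHom, substitute,
    MvPowerSeries.substitute_eq_subst (hasSubst_of_constantCoeff_zero fun _ ↦ hs)]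

theorem constantCoeff_substitute (hs : MvPowerSeries.constantCoeff s = 0) {g : PowerSeries R}
    (hg : constantCoeff g = 0) : MvPowerSeries.constantCoeff (substitute s g) = 0 := by
  have hs' : MvPowerSeries.HasSubst fun _ : Unit ↦ s := hasSubst_of_constantCoeff_zero fun _ ↦ hs
  rw [substitute, MvPowerSeries.substitute_eq_subst hs']
  exact MvPowerSeries.constantCoeff_subst_eq_zero hs' (fun _ ↦ hs) hg

end PowerSeries

namespace MvPowerSeries

variable {R : Type*} [CommRing R] {F : MvPowerSeries (Fin 2) R}

theorem constantCoeff_nSeries (hF0 : coeff 0 F = 0) (n : ℕ) :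
    constantCoeff (nSeries F n) = 0 := by
  induction n with
  | zero => rfl
  | succ n ih =>
    have ha := hasSubst_pair ih PowerSeries.constantCoeff_X
    rw [nSeries, substitute_eq_subst ha]
    exact constantCoeff_subst_eq_zero ha (Fin.forall_fin_two.2 ⟨ih, PowerSeries.constantCoeff_X⟩)
      (by rwa [← coeff_zero_eq_constantCoeff_apply])

theorem nSeries_dvd_nSeries_add_sub (hF0 : coeff 0 F = 0) (p n : ℕ) :
    nSeries F p ∣ nSeries F (n + p) - nSeries F n := by
  induction n with
  | zero => simp [nSeries]
  | succ n ih =>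
    rw [Nat.add_right_comm]
    exact ih.trans <| sub_dvd_substitute_pair_sub_left F (constantCoeff_nSeries hF0 _)
      (constantCoeff_nSeries hF0 _) PowerSeries.constantCoeff_X

end MvPowerSeries

theorem Function.Periodic.prod_Icc_mul_eq {M : Type*} [CommMonoid M] {φ : ℕ → M} {p j : ℕ}
    (hφ : Function.Periodic φ p) (hp : p.Prime) (hj : ¬ p ∣ j) :
    ∏ k ∈ Icc 1 (p - 1), φ (j * k) = ∏ k ∈ Icc 1 (p - 1), φ k := by
  set s := Icc 1 (p - 1)
  have hmem : ∀ {k}, k ∈ s ↔ ¬ p ∣ k ∧ k < p := fun {k} ↦ by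
    rw [mem_Icc]
    refine ⟨fun hk ↦ ⟨fun h ↦ ?_, by omega⟩, fun ⟨hk, hkp⟩ ↦ ⟨?_, by omega⟩⟩
    · exact absurd (Nat.eq_zero_of_dvd_of_lt h (by omega)) (by omega)
    · exact Nat.one_le_iff_ne_zero.2 fun h ↦ hk (h ▸ dvd_zero p)
  have hmaps : Set.MapsTo (fun k ↦ j * k % p) s s := fun k hk ↦ by
    rw [mem_coe, hmem] at hk ⊢
    rw [Nat.dvd_mod_iff dvd_rfl, hp.dvd_mul]
    exact ⟨by tauto, Nat.mod_lt _ hp.pos⟩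
  have hinj : Set.InjOn (fun k ↦ j * k % p) s := fun k₁ hk₁ k₂ hk₂ h ↦ by
    rw [mem_coe, hmem] at hk₁ hk₂
    have := Nat.ModEq.cancel_left_of_coprime ((hp.coprime_iff_not_dvd).2 hj) h
    rwa [Nat.ModEq, Nat.mod_eq_of_lt hk₁.2, Nat.mod_eq_of_lt hk₂.2] at this
  exact prod_nbij _ hmaps hinj
    ((s.finite_toSet.injOn_iff_bijOn_of_mapsTo hmaps).1 hinj).surjOn
    fun k _ ↦ (hφ.map_mod_nat _).symm

theorem Ideal.prod_Icc_mul_sub_prod_mem {A : Type*} [CommRing A] {I : Ideal A} {φ : ℕ → A}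
    {p j : ℕ} (hφ : ∀ n, φ (n + p) - φ n ∈ I) (hp : p.Prime) (hj : ¬ p ∣ j) :
    (∏ k ∈ Icc 1 (p - 1), φ (j * k)) - ∏ k ∈ Icc 1 (p - 1), φ k ∈ I := by
  rw [← Ideal.Quotient.eq, map_prod, map_prod]
  exact Function.Periodic.prod_Icc_mul_eq (φ := fun n ↦ Ideal.Quotient.mk I (φ n))
    (fun n ↦ Ideal.Quotient.eq.2 (hφ n)) hp hj

theorem stmt8_general {R : Type*} [CommRing R] (F : MvPowerSeries (Fin 2) R)
    (hF0 : MvPowerSeries.coeff 0 F = 0)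
    (p : ℕ) (hp : p.Prime) (j : ℕ) (hj : ¬ p ∣ j) :
    ((∏ k ∈ Finset.Icc 1 (p - 1), MvPowerSeries.nSeries F (j * k)) -
        ∏ k ∈ Finset.Icc 1 (p - 1), MvPowerSeries.nSeries F k ∈
      Ideal.span {MvPowerSeries.nSeries F p}) ∧
    ((∏ k ∈ Finset.Icc 1 (p - 1),
        MvPowerSeries.substitute
          ![(MvPowerSeries.X 0 : MvPowerSeries (Fin 2) R),
            PowerSeries.substitute (MvPowerSeries.X 1)
              (MvPowerSeries.nSeries F (j * k))] F) -
      (∏ k ∈ Finset.Icc 1 (p - 1),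
        MvPowerSeries.substitute
          ![(MvPowerSeries.X 0 : MvPowerSeries (Fin 2) R),
            PowerSeries.substitute (MvPowerSeries.X 1)
              (MvPowerSeries.nSeries F k)] F) ∈
      Ideal.span {PowerSeries.substitute
        ((MvPowerSeries.X 1 : MvPowerSeries (Fin 2) R))
        (MvPowerSeries.nSeries F p)}) := by
  have hdvd := nSeries_dvd_nSeries_add_sub hF0 p
  refine ⟨Ideal.prod_Icc_mul_sub_prod_mem (fun n ↦ Ideal.mem_span_singleton.2 (hdvd n)) hp hj,
    Ideal.prod_Icc_mul_sub_prod_mem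
      (φ := fun m ↦ substitute ![X 0, PowerSeries.substitute (X 1) (nSeries F m)] F)
      (fun n ↦ Ideal.mem_span_singleton.2 ?_) hp hj⟩
  have hX : constantCoeff (X 1 : MvPowerSeries (Fin 2) R) = 0 := constantCoeff_X 1
  have hsubst := map_dvd (substAlgHom (hasSubst_of_constantCoeff_zero fun _ : Unit ↦ hX)) (hdvd n)
  rw [map_sub, PowerSeries.coe_substAlgHom_eq_substitute hX] at hsubst
  exact hsubst.trans <| sub_dvd_substitute_pair_sub_right F (constantCoeff_X 0)
    (PowerSeries.constantCoeff_substitute hX (constantCoeff_nSeries hF0 _))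
    (PowerSeries.constantCoeff_substitute hX (constantCoeff_nSeries hF0 _))

/-- Let `R` be a commutative ring and `F ∈ R⟦x,y⟧` a one-dimensional
formal group law (zero constant coefficient, `F(x,0) = x`, `F(0,y) = y`,
`F(F(x,y),z) = F(x,F(y,z))`), with `n`-series `[n]_F`.  Let `p` be a prime and `j`
a natural number not divisible by `p`.  Then:
(i) `∏_{k=1}^{p-1} [j·k]_F(t) − ∏_{k=1}^{p-1} [k]_F(t)` lies in the ideal of `R⟦t⟧`
generated by `[p]_F(t)`; and
(ii) `∏_{k=1}^{p-1} F(x, [j·k]_F(t)) − ∏_{k=1}^{p-1} F(x, [k]_F(t))` lies in the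
ideal of `R⟦x,t⟧` generated by `[p]_F(t)` (with `x = X 0`, `t = X 1`). -/
theorem stmt8 {R : Type*} [CommRing R] (F : MvPowerSeries (Fin 2) R)
    (hF0 : MvPowerSeries.coeff 0 F = 0)
    (hFx0 : MvPowerSeries.substitute
      ![(MvPowerSeries.X 0 : MvPowerSeries (Fin 2) R), 0] F = MvPowerSeries.X 0)
    (hF0y : MvPowerSeries.substitute
      ![(0 : MvPowerSeries (Fin 2) R), MvPowerSeries.X 1] F = MvPowerSeries.X 1)
    (hFassoc : MvPowerSeries.substitute
        ![MvPowerSeries.substitute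
            ![(MvPowerSeries.X 0 : MvPowerSeries (Fin 3) R), MvPowerSeries.X 1] F,
          MvPowerSeries.X 2] F =
      MvPowerSeries.substitute
        ![(MvPowerSeries.X 0 : MvPowerSeries (Fin 3) R),
          MvPowerSeries.substitute ![MvPowerSeries.X 1, MvPowerSeries.X 2] F] F)
    (p : ℕ) (hp : p.Prime) (j : ℕ) (hj : ¬ p ∣ j) :
    ((∏ k ∈ Finset.Icc 1 (p - 1), MvPowerSeries.nSeries F (j * k)) -
        ∏ k ∈ Finset.Icc 1 (p - 1), MvPowerSeries.nSeries F k ∈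
      Ideal.span {MvPowerSeries.nSeries F p}) ∧
    ((∏ k ∈ Finset.Icc 1 (p - 1),
        MvPowerSeries.substitute
          ![(MvPowerSeries.X 0 : MvPowerSeries (Fin 2) R),
            PowerSeries.substitute (MvPowerSeries.X 1)
              (MvPowerSeries.nSeries F (j * k))] F) -
      (∏ k ∈ Finset.Icc 1 (p - 1),
        MvPowerSeries.substitute
          ![(MvPowerSeries.X 0 : MvPowerSeries (Fin 2) R),
            PowerSeries.substitute (MvPowerSeries.X 1)
              (MvPowerSeries.nSeries F k)] F) ∈
      Ideal.span {PowerSeries.substitute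
        ((MvPowerSeries.X 1 : MvPowerSeries (Fin 2) R))
        (MvPowerSeries.nSeries F p)}) :=
  stmt8_general F hF0 p hp j hj
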